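/- Let F : C \to D be a functor admitting both a left adjoint L and a right adjoint R. Then L is fully faithful if and only if R is fully faithful. -/

import Mathlib

/-!
A left adjoint is fully faithful iff the unit of its adjunction is invertible, and a right adjoint
iff the counit is. For `L ⊣ F ⊣ R` composing the adjunctions gives `L ⋙ F ⊣ R ⋙ F`. Since `𝟭` is
adjoint to itself, uniqueness of adjoints shows `L ⋙ F ≅ 𝟭` iff `R ⋙ F ≅ 𝟭`, and any isomorphism
`L ⋙ F ≅ 𝟭` (resp. `R ⋙ F ≅ 𝟭`) forces the unit of `L ⊣ F` (resp. counit of `F ⊣ R`) to be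
invertible.
-/

open CategoryTheory

namespace CategoryTheory.Adjunction

variable {C D : Type*} [Category C] [Category D] {L : C ⥤ D} {R : D ⥤ C}

lemma full_and_faithful_left_iff_isIso_unit (adj : L ⊣ R) :
    (L.Full ∧ L.Faithful) ↔ IsIso adj.unit :=
  ⟨fun ⟨_, _⟩ ↦ inferInstance, fun _ ↦
    let h := adj.fullyFaithfulLOfIsIsoUnit
    ⟨h.full, h.faithful⟩⟩

lemma full_and_faithful_right_iff_isIso_counit (adj : L ⊣ R) :
    (R.Full ∧ R.Faithful) ↔ IsIso adj.counit :=
  ⟨fun ⟨_, _⟩ ↦ inferInstance, fun _ ↦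
    let h := adj.fullyFaithfulROfIsIsoCounit
    ⟨h.full, h.faithful⟩⟩

end CategoryTheory.Adjunction

/-- If F admits both a left adjoint L and a right adjoint R,
then L is fully faithful if and only if R is fully faithful. -/
theorem left_adjoint_fully_faithful_iff_right_adjoint_fully_faithful
    {C D : Type*} [Category C] [Category D]
    (F : C ⥤ D) (L R : D ⥤ C) (adjL : L ⊣ F) (adjR : F ⊣ R) :
    (L.Full ∧ L.Faithful) ↔ (R.Full ∧ R.Faithful) := by
  rw [adjL.full_and_faithful_left_iff_isIso_unit, adjR.full_and_faithful_right_iff_isIso_counit]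
  exact (Adjunction.Triple.mk adjL adjR).isIso_unit_iff_isIso_counit
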